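/- arXiv:2604.18099 — 4 statements merged into one kernel-verified Lean document; each statement's English description precedes it below -/
import Mathlib

section
/- Let A be a finite abelian group of cardinality a, let k ≥ 1, and let M be a natural number with M > k·a·log a. Then there exists a function g : {1,…,M−1}^k → A such that every function f : {1,…,M}^k → A whose k-fold finite difference Δ^(k)(f) equals g is surjective. Here Δ^(k) = ∂₁∘⋯∘∂ₖ where (∂ᵢf)(a₁,…,aᵢ,…,aₖ) := f(a₁,…,aᵢ+1,…,aₖ) − f(a₁,…,aᵢ,…,aₖ). -/
/-!
A counting argument. Since `k ≥ 1`, `Δ^(k)` kills constants, so if `f` misses the value `v`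
then `f - v` is a nowhere-vanishing function with the same differences. The values of
`Δ^(k) f` on `{1,…,M-1}^k` only depend on `f` on `{1,…,M}^k`, so nowhere-vanishing functions
produce at most `(a-1)^(M^k)` difference patterns there; taking logarithms (with
`log (a-1) ≤ log a - 1/a` and Bernoulli's inequality) shows that `M > k a log a` makes this
smaller than the number `a^((M-1)^k)` of all patterns.
-/

/-- The `i`-th partial difference operator `∂ᵢ`:
`(∂ᵢ f)(a₁,…,aᵢ,…,aₖ) = f(a₁,…,aᵢ+1,…,aₖ) − f(a₁,…,aᵢ,…,aₖ)`. -/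
def partialDiff {k : ℕ} {A : Type*} [AddCommGroup A] (i : Fin k)
    (f : (Fin k → ℕ) → A) : (Fin k → ℕ) → A :=
  fun x => f (Function.update x i (x i + 1)) - f x

/-- The `k`-fold difference operator `Δ^(k) = ∂₁ ∘ ⋯ ∘ ∂ₖ`. -/
def totalDiff {k : ℕ} {A : Type*} [AddCommGroup A]
    (f : (Fin k → ℕ) → A) : (Fin k → ℕ) → A :=
  (List.ofFn (fun i : Fin k => partialDiff (A := A) i)).foldr (fun d g => d g) f

open Finset

def gridBox (k M : ℕ) : Finset (Fin k → ℕ) :=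
  Fintype.piFinset fun _ => Icc 1 M

section TotalDiff

variable {k M : ℕ} {A : Type*} [AddCommGroup A]

lemma totalDiff_eq_foldr (f : (Fin k → ℕ) → A) :
    totalDiff f = (List.finRange k).foldr partialDiff f := by
  rw [totalDiff, List.ofFn_eq_map, List.foldr_map]

lemma foldr_partialDiff_congr (l : List (Fin k)) {f g : (Fin k → ℕ) → A} {x : Fin k → ℕ}
    (h : ∀ y, (∀ j, x j ≤ y j ∧ y j ≤ x j + l.count j) → f y = g y) :
    l.foldr partialDiff f x = l.foldr partialDiff g x := by
  induction l generalizing x with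
  | nil => exact h x fun j => by simp
  | cons i l ih =>
    simp only [List.foldr_cons, partialDiff]
    congr 1 <;> refine ih fun y hy => h y fun j => ?_
    · have := hy j
      simp only [List.count_cons, beq_iff_eq]
      rcases eq_or_ne j i with rfl | hj
      · rw [Function.update_self] at this
        simp only [if_true]
        omega
      · rw [Function.update_of_ne hj] at this
        simp only [hj.symm, if_false]
        omega
    · have := hy j
      simp only [List.count_cons]
      omega

lemma totalDiff_congr {f g : (Fin k → ℕ) → A} {x : Fin k → ℕ}
    (h : ∀ y, (∀ j, x j ≤ y j ∧ y j ≤ x j + 1) → f y = g y) :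
    totalDiff f x = totalDiff g x := by
  rw [totalDiff_eq_foldr, totalDiff_eq_foldr]
  refine foldr_partialDiff_congr _ fun y hy => h y fun j => ?_
  simpa [List.count_eq_one_of_mem (List.nodup_finRange k) (List.mem_finRange j)] using hy j

lemma partialDiff_sub_const (i : Fin k) (f : (Fin k → ℕ) → A) (c : A) :
    partialDiff i (fun y => f y - c) = partialDiff i f := by
  funext x
  exact sub_sub_sub_cancel_right _ _ c

lemma totalDiff_sub_const (hk : 0 < k) (f : (Fin k → ℕ) → A) (c : A) :
    totalDiff (fun y => f y - c) = totalDiff f := by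
  obtain ⟨n, rfl⟩ := Nat.exists_eq_add_one_of_ne_zero hk.ne'
  simp only [totalDiff, List.ofFn_succ', List.concat_eq_append, List.foldr_append,
    List.foldr_cons, List.foldr_nil, partialDiff_sub_const]

lemma mem_gridBox {x : Fin k → ℕ} : x ∈ gridBox k M ↔ ∀ i, 1 ≤ x i ∧ x i ≤ M := by
  simp [gridBox]

lemma card_gridBox : #(gridBox k M) = M ^ k := by
  simp [gridBox]

lemma mem_gridBox_of_mem_gridBox_pred {x y : Fin k → ℕ} (hx : x ∈ gridBox k (M - 1))
    (hy : ∀ j, x j ≤ y j ∧ y j ≤ x j + 1) : y ∈ gridBox k M := by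
  rw [mem_gridBox] at hx ⊢
  intro j
  have := hx j
  have := hy j
  omega

theorem exists_forall_totalDiff_eq_imp_exists_zero [Fintype A]
    (hcard : (Fintype.card A - 1) ^ M ^ k < Fintype.card A ^ (M - 1) ^ k) :
    ∃ g : gridBox k (M - 1) → A, ∀ f : (Fin k → ℕ) → A,
      (∀ x : gridBox k (M - 1), totalDiff f x = g x) → ∃ x ∈ gridBox k M, f x = 0 := by
  classical
  by_contra! h
  choose f hfg hf0 using h
  let restrict (g : gridBox k (M - 1) → A) : gridBox k M → {a : A // a ≠ 0} :=
    fun x => ⟨f g x, hf0 g x x.2⟩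
  have hinj : Function.Injective restrict := by
    intro g₁ g₂ hg
    funext x
    rw [← hfg g₁ x, ← hfg g₂ x]
    exact totalDiff_congr fun y hy =>
      congrArg Subtype.val (congrFun hg ⟨y, mem_gridBox_of_mem_gridBox_pred x.2 hy⟩)
  have := Fintype.card_le_of_injective restrict hinj
  simp only [Fintype.card_fun, Fintype.card_coe, card_gridBox, ne_eq, Fintype.card_subtype_compl,
    Fintype.card_unique] at this
  exact this.not_gt hcard

end TotalDiff

lemma sub_one_pow_pow_lt_pow_sub_one_pow {k M a : ℕ} (ha : 0 < a)
    (hM : (k : ℝ) * a * Real.log a < M) : (a - 1) ^ M ^ k < a ^ (M - 1) ^ k := by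
  have hM0 : 0 < M := by
    have : 0 ≤ (k : ℝ) * a * Real.log a := by
      have := Real.log_natCast_nonneg a
      positivity
    exact_mod_cast this.trans_lt hM
  obtain rfl | ha2 : a = 1 ∨ 2 ≤ a := by omega
  · simp [hM0.ne']
  have hx : (2 : ℝ) ≤ a := by exact_mod_cast ha2
  have hm : (1 : ℝ) ≤ M := by exact_mod_cast hM0
  have hlog_pred : Real.log (a - 1) ≤ Real.log a - 1 / a := by
    have := Real.one_sub_inv_le_log_of_pos (x := a / (a - 1))
      (div_pos (by linarith) (by linarith))
    rw [inv_div, Real.log_div (by positivity) (by linarith)] at this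
    have h1 : 1 - ((a : ℝ) - 1) / a = 1 / a := by field_simp; ring
    linarith
  have hbernoulli : (M : ℝ) ^ k * (1 - k / M) ≤ (M - 1) ^ k := by
    have := one_add_mul_le_pow (a := -1 / (M : ℝ))
      (by rw [le_div_iff₀ (by linarith)]; linarith) k
    calc (M : ℝ) ^ k * (1 - k / M) = M ^ k * (1 + k * (-1 / M)) := by ring
      _ ≤ M ^ k * (1 + -1 / M) ^ k := by gcongr
      _ = (M - 1) ^ k := by rw [← mul_pow]; congr 1; field_simp; ring
  have hlog_lt : (M : ℝ) ^ k * Real.log (a - 1) < (M - 1) ^ k * Real.log a := by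
    have hkM : (k : ℝ) / M * Real.log a < 1 / a := by
      rw [div_mul_eq_mul_div, div_lt_div_iff₀ (by linarith) (by linarith)]
      linarith
    have := mul_lt_mul_of_pos_left hkM (pow_pos (by linarith : (0 : ℝ) < M) k)
    calc (M : ℝ) ^ k * Real.log (a - 1) ≤ M ^ k * (Real.log a - 1 / a) := by gcongr
      _ < M ^ k * (1 - k / M) * Real.log a := by linarith
      _ ≤ (M - 1) ^ k * Real.log a := by gcongr
  have hreal : ((a : ℝ) - 1) ^ M ^ k < (a : ℝ) ^ (M - 1) ^ k := by
    rw [← Real.log_lt_log_iff (pow_pos (by linarith) _) (pow_pos (by linarith) _),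
      Real.log_pow, Real.log_pow]
    push_cast [Nat.cast_sub hM0]
    exact hlog_lt
  rw [← Nat.cast_lt (α := ℝ)]
  push_cast [Nat.cast_sub ha]
  exact hreal

/-- Smith's combinatorial lemma: if `A` is a finite abelian group of cardinality `a`
and `M > k·a·log a`, then there is a prescribed difference function
`g : {1,…,M−1}^k → A` such that every `f : {1,…,M}^k → A` with `Δ^(k)(f) = g`
(on the box `{1,…,M−1}^k`) is surjective (on the box `{1,…,M}^k`). -/
theorem stmt0 {A : Type*} [AddCommGroup A] [Fintype A] (k M : ℕ) (hk : 1 ≤ k)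
    (hM : (M : ℝ) > (k : ℝ) * (Fintype.card A : ℝ) * Real.log (Fintype.card A)) :
    ∃ g : (Fin k → ℕ) → A,
      ∀ f : (Fin k → ℕ) → A,
        (∀ x : Fin k → ℕ, (∀ i, 1 ≤ x i ∧ x i ≤ M - 1) → totalDiff f x = g x) →
        ∀ a : A, ∃ x : Fin k → ℕ, (∀ i, 1 ≤ x i ∧ x i ≤ M) ∧ f x = a := by
  obtain ⟨g, hg⟩ := exists_forall_totalDiff_eq_imp_exists_zero (A := A) (k := k)
    (sub_one_pow_pow_lt_pow_sub_one_pow Fintype.card_pos hM)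
  refine ⟨fun x => if hx : x ∈ gridBox k (M - 1) then g ⟨x, hx⟩ else 0, fun f hf a => ?_⟩
  obtain ⟨x, hx, hfx⟩ := hg (fun y => f y - a) fun x => by
    rw [totalDiff_sub_const hk, hf x (mem_gridBox.mp x.2)]
    exact dif_pos x.2
  exact ⟨x, mem_gridBox.mp hx, sub_eq_zero.mp hfx⟩
end

section
/- Let G be a profinite group, H an open subgroup, M a discrete G-module, and k a natural number. If α ∈ Z^k(G, M) is a continuous cocycle whose restriction to Z^k(H, M) is a coboundary, then α is cohomologous (in Z^k(G,M)) to a cocycle whose restriction to Z^k(H, M) is identically zero. -/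
/-!
Continuous cochains on `Hᵏ` extend to `Gᵏ`: `Hᵏ` is open and closed in `Gᵏ`, so extension by zero
is continuous. Extending a cochain `β` with `dβ = α|_H` to `γ` on `G`, the differential commutes
with restriction and hence `(α - dγ)|_H = α|_H - dβ = 0`.
-/

/-- The differential on inhomogeneous group cochains
`d : C^n(G,M) → C^{n+1}(G,M)`. -/
def gd {G M : Type*} [Group G] [AddCommGroup M] [DistribMulAction G M] (n : ℕ)
    (x : (Fin n → G) → M) : (Fin (n + 1) → G) → M :=
  fun g => g 0 • x (fun i => g i.succ)
    + ∑ j : Fin (n + 1), ((-1 : ℤ) ^ ((j : ℕ) + 1)) • x (Fin.contractNth j (· * ·) g)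

open Function Set Topology

theorem gd_comp_monoidHom {G G' M : Type*} [Group G] [Group G'] [AddCommGroup M]
    [DistribMulAction G M] [DistribMulAction G' M] (f : G' →* G)
    (hf : ∀ (g : G') (m : M), f g • m = g • m) (n : ℕ) (x : (Fin n → G) → M) :
    gd n (fun g => x (f ∘ g)) = fun g => gd n x (f ∘ g) := by
  funext g
  simp only [gd, comp_apply, hf, Fin.comp_contractNth (· * ·) (· * ·) (map_mul f)]
  rfl

theorem Topology.IsOpenEmbedding.continuous_extend_zero {X Y M : Type*} [TopologicalSpace X]
    [TopologicalSpace Y] [TopologicalSpace M] [Zero M] {e : Y → X} (he : IsOpenEmbedding e)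
    (hrange : IsClosed (range e)) {f : Y → M} (hf : Continuous f) :
    Continuous (extend e f 0) := by
  refine continuous_iff_continuousAt.2 fun x => ?_
  by_cases hx : x ∈ range e
  · obtain ⟨y, rfl⟩ := hx
    rw [← he.continuousAt_iff, extend_comp he.injective]
    exact hf.continuousAt
  · have hzero : extend e f 0 =ᶠ[𝓝 x] fun _ => 0 := by
      filter_upwards [hrange.isOpen_compl.mem_nhds hx] with x' hx'
      exact extend_apply' _ _ _ fun ⟨y, hy⟩ => hx' ⟨y, hy⟩
    exact continuousAt_const.congr hzero.symm

theorem Subgroup.exists_continuous_extend_of_isOpen {G M : Type*} [Group G] [TopologicalSpace G]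
    [IsTopologicalGroup G] [TopologicalSpace M] [Zero M] {H : Subgroup G}
    (hH : IsOpen (H : Set G)) (ι : Type*) [Finite ι] {β : (ι → H) → M} (hβ : Continuous β) :
    ∃ γ : (ι → G) → M, Continuous γ ∧ ∀ h : ι → H, γ (fun i => (h i : G)) = β h := by
  have he : IsOpenEmbedding (Pi.map fun _ : ι => ((↑) : H → G)) :=
    .piMap fun _ => hH.isOpenEmbedding_subtypeVal
  have hrange : IsClosed (range (Pi.map fun _ : ι => ((↑) : H → G))) := by
    rw [range_piMap]
    exact isClosed_set_pi fun _ _ => by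
      rw [Subtype.range_coe_subtype]
      exact H.isClosed_of_isOpen hH
  exact ⟨extend _ β 0, he.continuous_extend_zero hrange hβ,
    fun h => he.injective.extend_apply β 0 h⟩

theorem stmt3_general {G : Type*} [Group G] [TopologicalSpace G] [IsTopologicalGroup G]
    (H : Subgroup G) (hH : IsOpen (H : Set G))
    {M : Type*} [AddCommGroup M] [DistribMulAction G M]
    [TopologicalSpace M]
    (k : ℕ) (α : (Fin (k + 1) → G) → M)
    (hβ : ∃ β : (Fin k → H) → M, Continuous β ∧
      gd k β = fun h : Fin (k + 1) → H => α (fun i => (h i : G))) :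
    ∃ γ : (Fin k → G) → M, Continuous γ ∧
      ∀ h : Fin (k + 1) → H, (α - gd k γ) (fun i => (h i : G)) = 0 := by
  obtain ⟨β, hβcont, hdβ⟩ := hβ
  obtain ⟨γ, hγcont, hγβ⟩ := H.exists_continuous_extend_of_isOpen hH (Fin k) hβcont
  have hγ_restrict : (fun h : Fin k → H => γ (fun i => (h i : G))) = β := funext hγβ
  refine ⟨γ, hγcont, fun h => ?_⟩
  have hdγ : gd k γ (fun i => (h i : G)) = gd k β h := by
    rw [← hγ_restrict]
    exact (congrFun (gd_comp_monoidHom H.subtype (fun _ _ => rfl) k γ) h).symm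
  rw [Pi.sub_apply, hdγ, hdβ, sub_self]

/-- Let `G` be a profinite group, `H` an open subgroup, and `M` a discrete `G`-module.
Any continuous cocycle `α ∈ Z^{k+1}(G,M)` whose restriction to `Z^{k+1}(H,M)` is a
coboundary (of a continuous cochain) is cohomologous, by a continuous cochain `γ`, to a
cocycle `α − dγ` whose restriction to `H` vanishes identically. -/
theorem stmt3 {G : Type*} [Group G] [TopologicalSpace G] [IsTopologicalGroup G]
    [CompactSpace G] [TotallyDisconnectedSpace G] [T2Space G]
    (H : Subgroup G) (hH : IsOpen (H : Set G))
    {M : Type*} [AddCommGroup M] [DistribMulAction G M]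
    [TopologicalSpace M] [DiscreteTopology M] [ContinuousSMul G M]
    (k : ℕ) (α : (Fin (k + 1) → G) → M) (hcont : Continuous α)
    (hcocycle : gd (k + 1) α = 0)
    (hβ : ∃ β : (Fin k → H) → M, Continuous β ∧
      gd k β = fun h : Fin (k + 1) → H => α (fun i => (h i : G))) :
    ∃ γ : (Fin k → G) → M, Continuous γ ∧
      ∀ h : Fin (k + 1) → H, (α - gd k γ) (fun i => (h i : G)) = 0 :=
  stmt3_general H hH k α hβ
end

section
/- Let F be a field of characteristic 0, n a natural number, and u ∈ F* such that the polynomial T^n − u is irreducible over F(μ_n) (the field obtained by adjoining all n-th roots of unity). Set F' = F(u^{1/n}). Then the maximal abelian subextension of F'/F is F(u^{1/m}), where m is the maximal divisor of n such that μ_m ⊆ F*. -/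
/-!
Put `s = r ^ (n / m)`, so `s ^ m = u`. As `μ_m ⊆ F`, `F(s)` is the splitting field of `X ^ m - u`,
and every automorphism multiplies `s` by an `m`-th root of unity lying in `F`; hence these
automorphisms commute.

For maximality, let `K ⊆ F(r)` be abelian Galois over `F`, and use the irreducibility of
`X ^ n - u` over `F(μ_n)` to get `T` fixing `μ_n` with `T r = ζ r`, `ζ` a primitive `n`-th root
of unity. If `τ ζ = ζ ^ c`, then `τ T τ⁻¹` and `T ^ c` agree on `r`, so the restriction `ρ` of `T`
to `K` satisfies `ρ ^ c = ρ`. Thus every `τ` fixes the primitive `t`-th root `ζ ^ (n / t)`,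
`t = orderOf ρ`, so `μ_t ⊆ F` and the maximality of `m` gives `t ∣ m`. An automorphism fixing `s`
acts on `r` as some `T ^ e` with `m ∣ e`, hence trivially on `K`, and Galois descent along
`F̄ / F` gives `K ⊆ F(s)`.
-/

open IntermediateField Polynomial

namespace IntermediateField

variable {F E : Type*} [Field F] [Field E] [Algebra F E]

theorem mem_of_pow_mem_of_coprime {K : IntermediateField F E} {x : E} {p q : ℕ}
    (hpq : p.Coprime q) (hp : x ^ p ∈ K) (hq : x ^ q ∈ K) : x ∈ K := by
  rcases eq_or_ne x 0 with rfl | hx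
  · exact zero_mem K
  have hbezout : x = (x ^ p) ^ p.gcdA q * (x ^ q) ^ p.gcdB q := by
    rw [← zpow_natCast, ← zpow_natCast, ← zpow_mul, ← zpow_mul, ← zpow_add₀ hx,
      ← Nat.gcd_eq_gcd_ab, hpq, Nat.cast_one, zpow_one]
  rw [hbezout]
  exact mul_mem (zpow_mem hp _) (zpow_mem hq _)

theorem pow_lcm_eq_one_mem {K : IntermediateField F E} {a b : ℕ} (ha : 0 < a)
    (hKa : ∀ ζ : E, ζ ^ a = 1 → ζ ∈ K) (hKb : ∀ ζ : E, ζ ^ b = 1 → ζ ∈ K)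
    {ζ : E} (hζ : ζ ^ Nat.lcm a b = 1) : ζ ∈ K := by
  have hab : a * (b / a.gcd b) = Nat.lcm a b := (Nat.mul_div_assoc a (Nat.gcd_dvd_right a b)).symm
  have hba : b * (a / a.gcd b) = Nat.lcm a b := by
    rw [Nat.lcm_comm, Nat.gcd_comm]
    exact (Nat.mul_div_assoc b (Nat.gcd_dvd_right b a)).symm
  refine mem_of_pow_mem_of_coprime (Nat.coprime_div_gcd_div_gcd (Nat.gcd_pos_of_pos_left b ha))
    (hKb _ ?_) (hKa _ ?_)
  · rw [← pow_mul, mul_comm, hba, hζ]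
  · rw [← pow_mul, mul_comm, hab, hζ]

end IntermediateField

section

variable {F Ω : Type*} [Field F] [Field Ω] [Algebra F Ω]

theorem ne_zero_of_pow_eq_algebraMap {n : ℕ} {x : Ω} {a : F} (hn : n ≠ 0) (ha : a ≠ 0)
    (hx : x ^ n = algebraMap F Ω a) : x ≠ 0 := by
  rintro rfl
  rw [zero_pow hn, eq_comm, map_eq_zero] at hx
  exact ha hx

theorem AlgEquiv.apply_div_self_pow_eq_one (σ : Gal(Ω/F)) {n : ℕ} {x : Ω} {a : F}
    (hx : x ^ n = algebraMap F Ω a) (hx0 : x ≠ 0) : (σ x / x) ^ n = 1 := by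
  rw [div_pow, ← map_pow, hx, σ.commutes, ← hx, div_self (pow_ne_zero n hx0)]

theorem AlgEquiv.apply_eq_self_of_mem_bot (σ : Gal(Ω/F)) {x : Ω}
    (hx : x ∈ (⊥ : IntermediateField F Ω)) : σ x = x := by
  obtain ⟨y, rfl⟩ := mem_bot.mp hx
  exact σ.commutes y

theorem AlgEquiv.restrictNormalHom_eq_of_apply_eq {K : IntermediateField F Ω} [Normal F K]
    {r : Ω} (hK : K ≤ F⟮r⟯) {σ₁ σ₂ : Gal(Ω/F)} (h : σ₁ r = σ₂ r) :
    restrictNormalHom K σ₁ = restrictNormalHom K σ₂ := by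
  have hres : σ₁.toAlgHom.comp F⟮r⟯.val = σ₂.toAlgHom.comp F⟮r⟯.val :=
    adjoin_algHom_ext F fun x hx ↦ by
      rw [Set.mem_singleton_iff] at hx
      subst hx
      exact h
  ext x
  simp only [restrictNormalHom_apply]
  exact DFunLike.congr_fun hres ⟨x, hK x.2⟩

theorem mul_comm_of_apply_apply_comm [Normal F Ω] {K : IntermediateField F Ω} [Normal F K]
    {r : Ω} (hK : K ≤ F⟮r⟯) (h : ∀ σ τ : Gal(Ω/F), σ (τ r) = τ (σ r)) (σ τ : Gal(K/F)) :
    σ * τ = τ * σ := by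
  obtain ⟨σ, rfl⟩ := AlgEquiv.restrictNormalHom_surjective Ω σ
  obtain ⟨τ, rfl⟩ := AlgEquiv.restrictNormalHom_surjective Ω τ
  rw [← map_mul, ← map_mul]
  exact AlgEquiv.restrictNormalHom_eq_of_apply_eq hK (h σ τ)

section Kummer

variable {m : ℕ} {a : F} {s : Ω}

theorem apply_apply_comm_of_pow_eq (hμ : ∀ ζ : Ω, ζ ^ m = 1 → ζ ∈ (⊥ : IntermediateField F Ω))
    (hs : s ^ m = algebraMap F Ω a) (hs0 : s ≠ 0) (σ τ : Gal(Ω/F)) : σ (τ s) = τ (σ s) := by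
  have hσ := σ.apply_eq_self_of_mem_bot (hμ _ (τ.apply_div_self_pow_eq_one hs hs0))
  have hτ := τ.apply_eq_self_of_mem_bot (hμ _ (σ.apply_div_self_pow_eq_one hs hs0))
  calc σ (τ s) = σ (τ s / s * s) := by rw [div_mul_cancel₀ _ hs0]
    _ = τ s / s * σ s := by rw [map_mul, hσ]
    _ = σ s / s * τ s := by rw [div_mul_eq_mul_div, div_mul_eq_mul_div, mul_comm]
    _ = τ (σ s / s * s) := by rw [map_mul, hτ]
    _ = τ (σ s) := by rw [div_mul_cancel₀ _ hs0]

theorem adjoin_rootSet_X_pow_sub_C_eq (hm : m ≠ 0)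
    (hμ : ∀ ζ : Ω, ζ ^ m = 1 → ζ ∈ (⊥ : IntermediateField F Ω))
    (hs : s ^ m = algebraMap F Ω a) (hs0 : s ≠ 0) :
    adjoin F ((X ^ m - C a).rootSet Ω) = F⟮s⟯ := by
  refine le_antisymm (adjoin_le_iff.mpr fun y hy ↦ ?_)
    (adjoin_simple_le_iff.mpr (subset_adjoin F _ ?_))
  · rw [mem_rootSet, map_sub, map_pow, aeval_X, aeval_C, sub_eq_zero] at hy
    have hys : (y / s) ^ m = 1 := by
      rw [div_pow, hy.2, hs, div_self (hs ▸ pow_ne_zero m hs0)]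
    rw [← div_mul_cancel₀ y hs0]
    exact mul_mem ((bot_le : ⊥ ≤ F⟮s⟯) (hμ _ hys)) (mem_adjoin_simple_self F s)
  · rw [mem_rootSet, map_sub, map_pow, aeval_X, aeval_C, hs, sub_self]
    exact ⟨X_pow_sub_C_ne_zero (Nat.pos_of_ne_zero hm) a, rfl⟩

theorem isGalois_adjoin_simple_of_pow_eq [IsAlgClosed Ω] (hm : (m : F) ≠ 0) (ha : a ≠ 0)
    (hμ : ∀ ζ : Ω, ζ ^ m = 1 → ζ ∈ (⊥ : IntermediateField F Ω))
    (hs : s ^ m = algebraMap F Ω a) : IsGalois F F⟮s⟯ := by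
  have hm0 : m ≠ 0 := by rintro rfl; exact hm Nat.cast_zero
  have hs0 : s ≠ 0 := ne_zero_of_pow_eq_algebraMap hm0 ha hs
  have : IsSplittingField F F⟮s⟯ (X ^ m - C a) := adjoin_rootSet_X_pow_sub_C_eq hm0 hμ hs hs0 ▸
    adjoin_rootSet_isSplittingField (IsAlgClosed.splits ((X ^ m - C a).map (algebraMap F Ω)))
  exact IsGalois.of_separable_splitting_field (separable_X_pow_sub_C a hm ha)

end Kummer

theorem AlgEquiv.pow_apply_eq_pow_mul {T : Gal(Ω/F)} {r ζ : Ω} (hζ : T ζ = ζ)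
    (hr : T r = ζ * r) (k : ℕ) : (T ^ k) r = ζ ^ k * r := by
  induction k with
  | zero => simp
  | succ k ih => rw [pow_succ', AlgEquiv.mul_apply, ih, map_mul, map_pow, hζ, hr, pow_succ]; ring

section Radical

variable {n : ℕ} {u : F} {r : Ω}

theorem exists_fixing_rootsOfUnity_apply_eq_mul [IsGalois F Ω] (hn : n ≠ 0)
    (hirr : Irreducible ((X : (adjoin F {x : Ω | x ^ n = 1})[X]) ^ n -
      C (algebraMap F (adjoin F {x : Ω | x ^ n = 1}) u)))
    (hr : r ^ n = algebraMap F Ω u) {η : Ω} (hη : η ^ n = 1) :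
    ∃ T : Gal(Ω/F), (∀ ξ : Ω, ξ ^ n = 1 → T ξ = ξ) ∧ T r = η * r := by
  set L := adjoin F {x : Ω | x ^ n = 1}
  have : Normal L Ω := Normal.tower_top_of_normal F L Ω
  have hmin : minpoly L r = X ^ n - C (algebraMap F L u) := by
    refine (minpoly.eq_of_irreducible_of_monic hirr ?_ (monic_X_pow_sub_C _ hn)).symm
    rw [map_sub, map_pow, aeval_X, aeval_C, ← IsScalarTower.algebraMap_apply, hr, sub_self]
  obtain ⟨T, hT⟩ := minpoly.exists_algEquiv_of_root' (Algebra.IsAlgebraic.isAlgebraic r)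
    (x := η * r) (by
      rw [hmin, map_sub, map_pow, aeval_X, aeval_C, ← IsScalarTower.algebraMap_apply, mul_pow,
        hη, one_mul, hr, sub_self])
  exact ⟨T.restrictScalars F, fun ξ hξ ↦ T.commutes ⟨ξ, subset_adjoin F _ hξ⟩, hT⟩

theorem conj_apply_eq_mul (hr : r ^ n = algebraMap F Ω u) (hr0 : r ≠ 0) {T : Gal(Ω/F)} {ζ : Ω}
    (hT : ∀ ξ : Ω, ξ ^ n = 1 → T ξ = ξ) (hTr : T r = ζ * r) (τ : Gal(Ω/F)) :
    (τ * T * τ⁻¹) r = τ ζ * r := by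
  have hη := τ⁻¹.apply_div_self_pow_eq_one hr hr0
  calc (τ * T * τ⁻¹) r = τ (T (τ⁻¹ r / r * r)) := by rw [div_mul_cancel₀ _ hr0]; rfl
    _ = τ ζ * τ (τ⁻¹ r / r * r) := by rw [map_mul, hT _ hη, hTr, mul_left_comm, map_mul]
    _ = τ ζ * r := by rw [div_mul_cancel₀ _ hr0, ← AlgEquiv.mul_apply, mul_inv_cancel]; rfl

theorem orderOf_restrictNormalHom_dvd {K : IntermediateField F Ω} [Normal F K] (hK : K ≤ F⟮r⟯)
    {ζ : Ω} (hζ : IsPrimitiveRoot ζ n) {T : Gal(Ω/F)} (hTζ : T ζ = ζ) (hTr : T r = ζ * r) :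
    orderOf (AlgEquiv.restrictNormalHom K T) ∣ n := by
  refine orderOf_dvd_of_pow_eq_one ?_
  rw [← map_pow, ← map_one (AlgEquiv.restrictNormalHom (K₁ := Ω) K)]
  refine AlgEquiv.restrictNormalHom_eq_of_apply_eq hK ?_
  rw [AlgEquiv.pow_apply_eq_pow_mul hTζ hTr, hζ.pow_eq_one, one_mul, AlgEquiv.one_apply]

theorem mem_bot_of_pow_orderOf_restrictNormalHom_eq_one [IsGalois F Ω] (hn : 0 < n)
    (hr : r ^ n = algebraMap F Ω u) (hr0 : r ≠ 0) {K : IntermediateField F Ω} [Normal F K]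
    (hK : K ≤ F⟮r⟯) (hKab : ∀ σ τ : Gal(K/F), σ * τ = τ * σ)
    {ζ : Ω} (hζ : IsPrimitiveRoot ζ n) {T : Gal(Ω/F)} (hT : ∀ ξ : Ω, ξ ^ n = 1 → T ξ = ξ)
    (hTr : T r = ζ * r) {ξ : Ω} (hξ : ξ ^ orderOf (AlgEquiv.restrictNormalHom K T) = 1) :
    ξ ∈ (⊥ : IntermediateField F Ω) := by
  set ρ := AlgEquiv.restrictNormalHom K T
  have hTζ : T ζ = ζ := hT ζ hζ.pow_eq_one
  have htn : orderOf ρ ∣ n := orderOf_restrictNormalHom_dvd hK hζ hTζ hTr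
  have hprim : IsPrimitiveRoot (ζ ^ (n / orderOf ρ)) (orderOf ρ) :=
    hζ.pow hn (Nat.div_mul_cancel htn).symm
  suffices hfix : ζ ^ (n / orderOf ρ) ∈ (⊥ : IntermediateField F Ω) by
    have : NeZero (orderOf ρ) := ⟨(Nat.pos_of_dvd_of_pos htn hn).ne'⟩
    obtain ⟨i, -, rfl⟩ := hprim.eq_pow_of_pow_eq_one hξ
    exact pow_mem hfix i
  rw [InfiniteGalois.mem_bot_iff_fixed]
  intro τ
  have : NeZero n := ⟨hn.ne'⟩
  have hτζ : τ ζ ^ n = 1 := by rw [← map_pow, hζ.pow_eq_one, map_one]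
  obtain ⟨c, -, hc⟩ := hζ.eq_pow_of_pow_eq_one hτζ
  have hρc : ρ ^ c = ρ := calc
    ρ ^ c = AlgEquiv.restrictNormalHom K (T ^ c) := (map_pow _ _ _).symm
    _ = AlgEquiv.restrictNormalHom K (τ * T * τ⁻¹) := by
      refine AlgEquiv.restrictNormalHom_eq_of_apply_eq hK ?_
      rw [AlgEquiv.pow_apply_eq_pow_mul hTζ hTr, conj_apply_eq_mul hr hr0 hT hTr, hc]
    _ = AlgEquiv.restrictNormalHom K τ * ρ * (AlgEquiv.restrictNormalHom K τ)⁻¹ := by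
      simp only [map_mul, map_inv, ρ]
    _ = ρ := by rw [hKab _ ρ, mul_inv_cancel_right]
  have hc1 : c ≡ 1 [MOD orderOf ρ] := pow_eq_pow_iff_modEq.mp (hρc.trans (pow_one ρ).symm)
  rw [map_pow, ← hc, ← pow_mul, mul_comm, pow_mul, pow_eq_pow_of_modEq hc1 hprim.pow_eq_one,
    pow_one]

theorem le_adjoin_pow_div_of_mul_comm [IsGalois F Ω] (hn : 0 < n) {m : ℕ} (hmn : m ∣ n)
    (hu : u ≠ 0)
    (hirr : Irreducible ((X : (adjoin F {x : Ω | x ^ n = 1})[X]) ^ n -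
      C (algebraMap F (adjoin F {x : Ω | x ^ n = 1}) u)))
    (hr : r ^ n = algebraMap F Ω u)
    (hm : ∀ ξ : Ω, ξ ^ m = 1 → ξ ∈ (⊥ : IntermediateField F Ω))
    (hmax : ∀ m' : ℕ, m' ∣ n → (∀ ξ : Ω, ξ ^ m' = 1 → ξ ∈ (⊥ : IntermediateField F Ω)) → m' ≤ m)
    {ζ : Ω} (hζ : IsPrimitiveRoot ζ n) {K : IntermediateField F Ω} [Normal F K]
    (hK : K ≤ F⟮r⟯) (hKab : ∀ σ τ : Gal(K/F), σ * τ = τ * σ) :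
    K ≤ F⟮r ^ (n / m)⟯ := by
  have : NeZero n := ⟨hn.ne'⟩
  have hm0 : 0 < m := Nat.pos_of_dvd_of_pos hmn hn
  have hr0 : r ≠ 0 := ne_zero_of_pow_eq_algebraMap hn.ne' hu hr
  obtain ⟨T, hT, hTr⟩ := exists_fixing_rootsOfUnity_apply_eq_mul hn.ne' hirr hr hζ.pow_eq_one
  have hTζ : T ζ = ζ := hT ζ hζ.pow_eq_one
  set ρ := AlgEquiv.restrictNormalHom K T
  have htn : orderOf ρ ∣ n := orderOf_restrictNormalHom_dvd hK hζ hTζ hTr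
  have htm : orderOf ρ ∣ m := by
    have ht0 : 0 < orderOf ρ := Nat.pos_of_dvd_of_pos htn hn
    have hlcm : Nat.lcm (orderOf ρ) m ≤ m := hmax _ (Nat.lcm_dvd htn hmn) fun ξ ↦
      pow_lcm_eq_one_mem ht0
        (fun _ ↦ mem_bot_of_pow_orderOf_restrictNormalHom_eq_one hn hr hr0 hK hKab hζ hT hTr) hm
    have hlcm_eq : Nat.lcm (orderOf ρ) m = m :=
      le_antisymm hlcm (Nat.le_of_dvd (Nat.lcm_pos ht0 hm0) (Nat.dvd_lcm_right _ _))
    exact hlcm_eq ▸ Nat.dvd_lcm_left _ _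
  rw [← InfiniteGalois.fixedField_fixingSubgroup F⟮r ^ (n / m)⟯, le_iff_le,
    ← IntermediateField.restrictNormalHom_ker K]
  intro σ hσ
  obtain ⟨e, -, he⟩ := hζ.eq_pow_of_pow_eq_one (σ.apply_div_self_pow_eq_one hr hr0)
  have hme : m ∣ e := by
    have hσs : σ (r ^ (n / m)) = r ^ (n / m) :=
      (mem_fixingSubgroup_iff _ σ).mp hσ _ (mem_adjoin_simple_self F _)
    have hn_dvd : m * (n / m) ∣ e * (n / m) := by
      rw [Nat.mul_div_cancel' hmn, ← hζ.pow_eq_one_iff_dvd, pow_mul, he, div_pow, ← map_pow, hσs,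
        div_self (pow_ne_zero _ hr0)]
    exact Nat.dvd_of_mul_dvd_mul_right (Nat.div_pos (Nat.le_of_dvd hn hmn) hm0) hn_dvd
  have hσr : σ r = (T ^ e) r := by
    rw [AlgEquiv.pow_apply_eq_pow_mul hTζ hTr, he, div_mul_cancel₀ _ hr0]
  rw [MonoidHom.mem_ker, AlgEquiv.restrictNormalHom_eq_of_apply_eq hK hσr, map_pow,
    orderOf_dvd_iff_pow_eq_one.mp (htm.trans hme)]

end Radical
end

/-- Kummer-theoretic lemma: let `F` be a field of characteristic `0`, `u ∈ F*`, and `n ≥ 1`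
such that `T^n − u` is irreducible over `F(μ_n)`.  Let `r` be an `n`-th root of `u` in an
algebraic closure, so `F' = F(r)`, and let `m` be the maximal divisor of `n` with `μ_m ⊆ F`.
Then `F(r^{n/m}) = F(u^{1/m})` is the maximal abelian subextension of `F'/F`: it is an
abelian Galois subextension containing every abelian Galois subextension of `F'/F`. -/
theorem stmt7 (F : Type*) [Field F] [CharZero F] (n : ℕ) (hn : 0 < n)
    (u : F) (hu : u ≠ 0)
    (hirr : Irreducible ((X : Polynomial (adjoin F {x : AlgebraicClosure F | x ^ n = 1})) ^ n -
      C (algebraMap F (adjoin F {x : AlgebraicClosure F | x ^ n = 1}) u)))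
    (r : AlgebraicClosure F) (hr : r ^ n = algebraMap F (AlgebraicClosure F) u)
    (m : ℕ) (hmn : m ∣ n)
    (hm : ∀ ζ : AlgebraicClosure F, ζ ^ m = 1 →
      ζ ∈ (⊥ : IntermediateField F (AlgebraicClosure F)))
    (hmax : ∀ m' : ℕ, m' ∣ n →
      (∀ ζ : AlgebraicClosure F, ζ ^ m' = 1 →
        ζ ∈ (⊥ : IntermediateField F (AlgebraicClosure F))) →
      m' ≤ m) :
    adjoin F {r ^ (n / m)} ≤ adjoin F {r} ∧
    IsGalois F (adjoin F {r ^ (n / m)}) ∧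
    (∀ σ τ : (adjoin F {r ^ (n / m)}) ≃ₐ[F] (adjoin F {r ^ (n / m)}), σ * τ = τ * σ) ∧
    (∀ K : IntermediateField F (AlgebraicClosure F), K ≤ adjoin F {r} →
      IsGalois F K → (∀ σ τ : K ≃ₐ[F] K, σ * τ = τ * σ) →
      K ≤ adjoin F {r ^ (n / m)}) := by
  have hm0 : m ≠ 0 := (Nat.pos_of_dvd_of_pos hmn hn).ne'
  have hs : (r ^ (n / m)) ^ m = algebraMap F _ u := by
    rw [← pow_mul, Nat.div_mul_cancel hmn, hr]
  have hs0 : r ^ (n / m) ≠ 0 := ne_zero_of_pow_eq_algebraMap hm0 hu hs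
  have hgal : IsGalois F F⟮r ^ (n / m)⟯ :=
    isGalois_adjoin_simple_of_pow_eq (Nat.cast_ne_zero.mpr hm0) hu hm hs
  have : NeZero n := ⟨hn.ne'⟩
  obtain ⟨ζ, hζ⟩ := HasEnoughRootsOfUnity.exists_primitiveRoot (AlgebraicClosure F) n
  refine ⟨adjoin_simple_le_iff.mpr (pow_mem (mem_adjoin_simple_self F r) _), hgal,
    mul_comm_of_apply_apply_comm le_rfl (apply_apply_comm_of_pow_eq hm hs hs0), ?_⟩
  intro K hK _ hKab
  exact le_adjoin_pow_div_of_mul_comm hn hmn hu hirr hr hm hmax hζ hK hKab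
end

section
/- Let V : B → A be a left exact functor between abelian categories and let 𝔠 = (Id_A ↓ V) be the comma category whose objects are triples (A, B, θ : A → V(B)). Then 𝔠 is an abelian category, and the injective objects of 𝔠 are exactly those of the form (I ⊕ V(J), J, pr : I ⊕ V(J) → V(J)) with I injective in A and J injective in B. Moreover, if A and B have enough injectives, then so does 𝔠. -/
/-!
When `L` is right exact and `R` left exact, kernels and cokernels in `Comma L R` are computed
componentwise, so both components of a coimage-image comparison are isomorphisms and `Comma L R`
is abelian.

Let `X = (X₁, X₂, θ)` be injective in `(𝟭 A ↓ V)`. Extending morphisms out of the objects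
`(0, B', 0)` and `(A', 0, 0)` shows that `X₂` and `ker θ` are injective, and extending the
identity of `(0, X₂, 0)` along `(0, X₂, 0) ↪ (V X₂, X₂, 𝟙)` gives a section of `θ`, so the
splitting lemma yields `X ≅ (ker θ ⊞ V X₂, X₂, pr₂)`. Conversely, a morphism into
`(I ⊞ V J, J, pr₂)` extends along a monomorphism by extending its `J`-component, which determines
the `V J`-component, and its `I`-component independently. Finally `X` embeds into
`(I ⊞ V J, J, pr₂)` through `(X₁ ↪ I, θ ≫ V (X₂ ↪ J))` and `X₂ ↪ J`.
-/

open CategoryTheory CategoryTheory.Limits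

namespace CategoryTheory.Comma

variable {A B T : Type*} [Category A] [Category B] [Category T]

section Limits

variable {J : Type*} [Category J] {L : A ⥤ T} {R : B ⥤ T}
  [HasLimitsOfShape J A] [HasLimitsOfShape J B] [PreservesLimitsOfShape J R]

instance preservesLimitsOfShape_fst : PreservesLimitsOfShape J (fst L R) where
  preservesLimit := preservesLimit_of_preserves_limit_cone
    (coneOfPreservesIsLimit _ (limit.isLimit _) (limit.isLimit _)) (limit.isLimit _)

instance preservesLimitsOfShape_snd : PreservesLimitsOfShape J (snd L R) where
  preservesLimit := preservesLimit_of_preserves_limit_cone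
    (coneOfPreservesIsLimit _ (limit.isLimit _) (limit.isLimit _)) (limit.isLimit _)

end Limits

lemma isIso_of_isIso_left_right {L : A ⥤ T} {R : B ⥤ T} {X Y : Comma L R} (f : X ⟶ Y)
    [IsIso f.left] [IsIso f.right] : IsIso f :=
  (isoMk (asIso f.left) (asIso f.right) f.w).isIso_hom

lemma mono_of_mono_left_right {L : A ⥤ T} {R : B ⥤ T} {X Y : Comma L R} (f : X ⟶ Y)
    [Mono f.left] [Mono f.right] : Mono f where
  right_cancellation g h e := by
    ext
    · exact (cancel_mono f.left).1 (congrArg CommaMorphism.left e)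
    · exact (cancel_mono f.right).1 (congrArg CommaMorphism.right e)

noncomputable abbrev abelian [Abelian A] [Abelian B] [Abelian T] (L : A ⥤ T) (R : B ⥤ T)
    [PreservesFiniteColimits L] [PreservesFiniteLimits R] : Abelian (Comma L R) := by
  have : L.Additive := rightExactFunctor_le_additiveFunctor A T L ‹_›
  have : R.Additive := leftExactFunctor_le_additiveFunctor B T R ‹_›
  have (X Y : Comma L R) (f : X ⟶ Y) : IsIso (Abelian.coimageImageComparison f) := by
    have : IsIso (Abelian.coimageImageComparison f).left := (Arrow.isIso_iff_isIso_of_isIso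
      (Abelian.PreservesCoimageImageComparison.iso (fst L R) f).hom).2 inferInstance
    have : IsIso (Abelian.coimageImageComparison f).right := (Arrow.isIso_iff_isIso_of_isIso
      (Abelian.PreservesCoimageImageComparison.iso (snd L R) f).hom).2 inferInstance
    exact isIso_of_isIso_left_right _
  exact Abelian.ofCoimageImageComparisonIsIso

section Injective

open ZeroObject

variable [Abelian A] {V : B ⥤ A}

lemma injective_biprod_snd [Abelian B] [PreservesFiniteLimits V] {I : A} {J : B} [Injective I]
    [Injective J] :
    Injective (⟨I ⊞ V.obj J, J, biprod.snd⟩ : Comma (𝟭 A) V) where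
  factors {Y Y'} f m _ := by
    have : Mono m.left := (fst (𝟭 A) V).map_mono m
    have : Mono m.right := (snd (𝟭 A) V).map_mono m
    have hf : f.left ≫ biprod.snd = Y.hom ≫ V.map f.right := by simpa using f.w
    have hm : m.left ≫ Y'.hom = Y.hom ≫ V.map m.right := by simpa using m.w
    obtain ⟨g, hg⟩ := Injective.factors f.right m.right
    obtain ⟨h, hh⟩ := Injective.factors (f.left ≫ biprod.fst) m.left
    refine ⟨⟨biprod.lift h (Y'.hom ≫ V.map g), g, by simp⟩, ?_⟩
    ext
    · simpa using hh
    · simp [reassoc_of% hm, ← V.map_comp, hg, hf]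
    · simpa using hg

lemma injective_right {X : Comma (𝟭 A) V} [Injective X] : Injective X.right where
  factors {B' B''} f m _ := by
    let ι : (⟨0, B', 0⟩ : Comma (𝟭 A) V) ⟶ ⟨0, B'', 0⟩ := ⟨𝟙 0, m, by simp⟩
    have : Mono ι := mono_of_mono_left_right ι
    obtain ⟨g, hg⟩ := Injective.factors (⟨0, f, by simp⟩ : (⟨0, B', 0⟩ : Comma (𝟭 A) V) ⟶ X) ι
    exact ⟨g.right, congrArg CommaMorphism.right hg⟩

lemma injective_kernel_hom [HasZeroMorphisms B] [HasZeroObject B] {X : Comma (𝟭 A) V}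
    [Injective X] : Injective (kernel X.hom) where
  factors {A' A''} f m _ := by
    let ι : (⟨A', 0, 0⟩ : Comma (𝟭 A) V) ⟶ ⟨A'', 0, 0⟩ := ⟨m, 𝟙 0, by simp⟩
    have : Mono ι := mono_of_mono_left_right ι
    obtain ⟨g, hg⟩ := Injective.factors
      (⟨f ≫ kernel.ι X.hom, 0, by simp⟩ : (⟨A', 0, 0⟩ : Comma (𝟭 A) V) ⟶ X) ι
    have hg₀ : g.left ≫ X.hom = 0 := by simpa using g.w
    refine ⟨kernel.lift _ g.left hg₀, ?_⟩
    ext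
    simpa using congrArg CommaMorphism.left hg

instance isSplitEpi_hom_of_injective {X : Comma (𝟭 A) V} [Injective X] : IsSplitEpi X.hom := by
  let ι : (⟨0, X.right, 0⟩ : Comma (𝟭 A) V) ⟶ ⟨V.obj X.right, X.right, 𝟙 _⟩ := ⟨0, 𝟙 _, by simp⟩
  have : Mono ι := mono_of_mono_left_right ι
  obtain ⟨g, hg⟩ := Injective.factors
    (⟨0, 𝟙 _, by simp⟩ : (⟨0, X.right, 0⟩ : Comma (𝟭 A) V) ⟶ X) ι
  have hg₁ : g.right = 𝟙 _ := by simpa [ι] using congrArg CommaMorphism.right hg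
  exact IsSplitEpi.mk' ⟨g.left, by simpa [hg₁] using g.w⟩

noncomputable def isoBiprodKernel (X : Comma (𝟭 A) V) [IsSplitEpi X.hom] :
    X ≅ ⟨kernel X.hom ⊞ V.obj X.right, X.right, biprod.snd⟩ :=
  let e : X.left ≅ kernel X.hom ⊞ V.obj X.right := biprod.uniqueUpToIso _ _
    (isBilimitBinaryBiconeOfIsSplitEpiOfKernel (kernelIsKernel X.hom))
  isoMk e (Iso.refl _) (by
    rw [Functor.id_map, Iso.refl_hom, V.map_id, Category.comp_id]
    exact biprod.lift_snd _ _)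

section

variable [Abelian B] [PreservesFiniteLimits V]

theorem injective_iff_nonempty_iso_biprod (X : Comma (𝟭 A) V) :
    Injective X ↔ ∃ (I : A) (J : B), Injective I ∧ Injective J ∧
      Nonempty (X ≅ ⟨I ⊞ V.obj J, J, biprod.snd⟩) := by
  constructor
  · intro
    exact ⟨_, _, injective_kernel_hom, injective_right, ⟨isoBiprodKernel X⟩⟩
  · rintro ⟨I, J, hI, hJ, ⟨e⟩⟩
    exact Injective.of_iso e.symm injective_biprod_snd

theorem enoughInjectives [EnoughInjectives A] [EnoughInjectives B] :
    EnoughInjectives (Comma (𝟭 A) V) where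
  presentation X := by
    let ι : X ⟶ ⟨Injective.under X.left ⊞ V.obj (Injective.under X.right),
        Injective.under X.right, biprod.snd⟩ :=
      ⟨biprod.lift (Injective.ι _) (X.hom ≫ V.map (Injective.ι _)), Injective.ι _, by simp⟩
    have : Mono ι := mono_of_mono_left_right ι
    exact ⟨{ J := _, injective := injective_biprod_snd, f := ι }⟩

end

end Injective

end CategoryTheory.Comma

/-- Let `V : B ⥤ A` be a left exact functor between abelian categories, and let
`𝔠 = (Id_A ↓ V)` be the comma category with objects `(A, B, θ : A → V(B))`.  Then
`𝔠` is abelian; the injective objects of `𝔠` are exactly those isomorphic to one of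
the form `(I ⊕ V(J), J, pr : I ⊕ V(J) → V(J))` with `I` injective in `A` and `J`
injective in `B`; and if `A` and `B` have enough injectives, so does `𝔠`. -/
theorem stmt16 {A B : Type*} [Category A] [Category B] [Abelian A] [Abelian B]
    (V : B ⥤ A) [PreservesFiniteLimits V] :
    Nonempty (Abelian (Comma (𝟭 A) V)) ∧
    (∀ X : Comma (𝟭 A) V, Injective X ↔
      ∃ (I : A) (J : B), Injective I ∧ Injective J ∧
        Nonempty (X ≅ ⟨I ⊞ V.obj J, J, (biprod.snd : I ⊞ V.obj J ⟶ V.obj J)⟩)) ∧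
    (EnoughInjectives A → EnoughInjectives B → EnoughInjectives (Comma (𝟭 A) V)) :=
  ⟨⟨Comma.abelian _ _⟩, Comma.injective_iff_nonempty_iso_biprod, fun _ _ => Comma.enoughInjectives⟩
end
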